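/- arXiv:2602.01458 — 4 statements merged into one kernel-verified Lean document; each statement's English description precedes it below -/
import Mathlib

section
/- In the Samelson setup, let α, γ ∈ Δ⁺ be positive roots of the simple ideal 𝔤ᵢ with α + γ ∈ Δ, and set β := −α − γ (a negative root). Then for all X ∈ 𝔤_γ, Y ∈ 𝔤_α, Z ∈ 𝔤_β one has Φ(X, Y, Z) = −λᵢ (c_{α+γ} − c_γ) B([X,Y], Z). In particular, if the constants satisfy the pluriclosed relation c_{α+γ} = c_α + c_γ − 1, then Φ(X, Y, Z) = −λᵢ (c_α − 1) B([X,Y], Z). -/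
/-- The Samelson setup: a finite-dimensional complex semisimple Lie algebra `L` with a
Cartan subalgebra `H`, root system `Δ` (with values in an additive group `R` of weights),
a choice of positive roots `pos` with simple roots, root spaces, the decomposition into
simple ideals, the left-invariant metric `G` determined by constants `lam i > 0` and
`c α > 0`, a Samelson complex structure `J`, and the Killing form `killingForm ℂ L`. -/
structure SamelsonSetup (R L : Type) [AddCommGroup R] [LieRing L] [LieAlgebra ℂ L] where
  finiteDim : FiniteDimensional ℂ L
  semisimple : LieAlgebra.IsSemisimple ℂ L
  /-- the Cartan subalgebra 𝔥 -/
  H : LieSubalgebra ℂ L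
  cartan : H.IsCartanSubalgebra
  /-- the root system Δ ⊆ 𝔥* -/
  Δ : Set R
  /-- the positive roots Δ⁺ -/
  pos : Set R
  Δ_finite : Δ.Finite
  pos_subset : pos ⊆ Δ
  zero_not_mem : (0 : R) ∉ Δ
  neg_mem : ∀ a ∈ Δ, -a ∈ Δ
  pos_or_neg : ∀ a ∈ Δ, a ∈ pos ∨ -a ∈ pos
  not_pos_and_neg : ∀ a ∈ pos, -a ∉ pos
  /-- the number of simple roots (= rank) -/
  r : ℕ
  /-- the simple roots α₁, …, α_r -/
  simple : Fin r → R
  simple_mem : ∀ j, simple j ∈ pos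
  /-- the coefficients of a positive root as an ℕ-linear combination of simple roots -/
  coeff : R → Fin r → ℕ
  coeff_spec : ∀ a ∈ pos, a = ∑ j, coeff a j • simple j
  coeff_unique : ∀ a ∈ pos, ∀ k : Fin r → ℕ, a = ∑ j, k j • simple j → k = coeff a
  descent : ∀ a ∈ pos, (∀ j, a ≠ simple j) → ∃ j, ∃ b ∈ pos, a = simple j + b
  /-- the root spaces 𝔤_α (with 𝔤₀ = 𝔥) -/
  rootSpace : R → Submodule ℂ L
  rootSpace_zero : rootSpace 0 = H.toSubmodule
  rootSpace_eq_bot : ∀ a : R, a ≠ 0 → a ∉ Δ → rootSpace a = ⊥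
  bracket_mem : ∀ (a b : R), ∀ X ∈ rootSpace a, ∀ Y ∈ rootSpace b, ⁅X, Y⁆ ∈ rootSpace (a + b)
  rootSpace_sup : (⨆ a ∈ insert (0 : R) Δ, rootSpace a) = ⊤
  rootSpace_indep : iSupIndep fun a : ↥(insert (0 : R) Δ) => rootSpace a.1
  /-- the number of simple ideals -/
  s : ℕ
  /-- the simple ideals 𝔤₁, …, 𝔤_s -/
  ideal : Fin s → LieIdeal ℂ L
  ideal_simple : ∀ i, LieAlgebra.IsSimple ℂ (ideal i)
  ideal_sup : (⨆ i, ideal i) = ⊤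
  ideal_indep : iSupIndep ideal
  /-- the simple ideal a root belongs to -/
  idealOf : R → Fin s
  idealOf_neg : ∀ a, idealOf (-a) = idealOf a
  rootSpace_le_ideal : ∀ a ∈ Δ, ∀ X ∈ rootSpace a, X ∈ ideal (idealOf a)
  /-- the positive constants λᵢ -/
  lam : Fin s → ℝ
  lam_pos : ∀ i, 0 < lam i
  /-- the positive constants c_α, with c_{-α} = c_α -/
  c : R → ℝ
  c_pos : ∀ a ∈ Δ, 0 < c a
  c_neg : ∀ a : R, c (-a) = c a
  /-- the metric g -/
  G : LinearMap.BilinForm ℂ L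
  G_symm : ∀ X Y, G X Y = G Y X
  G_H : ∀ i : Fin s, ∀ X Y : L, X ∈ H → X ∈ ideal i → Y ∈ H → Y ∈ ideal i →
    G X Y = -(lam i : ℂ) * killingForm ℂ L X Y
  G_root : ∀ a ∈ Δ, ∀ X ∈ rootSpace a, ∀ Y ∈ rootSpace (-a),
    G X Y = -(lam (idealOf a) : ℂ) * (c a : ℂ) * killingForm ℂ L X Y
  G_roots_ne : ∀ a ∈ Δ, ∀ b ∈ Δ, a + b ≠ 0 →
    ∀ X ∈ rootSpace a, ∀ Y ∈ rootSpace b, G X Y = 0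
  G_H_root : ∀ a ∈ Δ, ∀ X ∈ H, ∀ Y ∈ rootSpace a, G X Y = 0
  G_ideal_ne : ∀ i j : Fin s, i ≠ j → ∀ X ∈ ideal i, ∀ Y ∈ ideal j, G X Y = 0
  /-- the Samelson complex structure J -/
  J : L →ₗ[ℂ] L
  J_H : ∀ X ∈ H, J X ∈ H
  J_J_H : ∀ X ∈ H, J (J X) = -X
  J_pos : ∀ a ∈ pos, ∀ X ∈ rootSpace a, J X = Complex.I • X
  J_neg : ∀ a ∈ pos, ∀ X ∈ rootSpace (-a), J X = -(Complex.I • X)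

namespace SamelsonSetup

variable {R L : Type} [AddCommGroup R] [LieRing L] [LieAlgebra ℂ L]

/-- The Nomizu form of the Bismut connection:
Φ(X,Y,Z) = ½( g([X,Y],Z) + g([Z,X],Y) − g([Y,Z],X)
            − g([JX,JY],Z) − g([JZ,JX],Y) − g([JY,JZ],X) ). -/
noncomputable def Phi (S : SamelsonSetup R L) (X Y Z : L) : ℂ :=
  (1 / 2 : ℂ) * (S.G ⁅X, Y⁆ Z + S.G ⁅Z, X⁆ Y - S.G ⁅Y, Z⁆ X
    - S.G ⁅S.J X, S.J Y⁆ Z - S.G ⁅S.J Z, S.J X⁆ Y - S.G ⁅S.J Y, S.J Z⁆ X)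

/-- The Bismut torsion: T(X,Y,Z) = −g([JX,JY],Z) − g([JY,JZ],X) − g([JZ,JX],Y). -/
noncomputable def T (S : SamelsonSetup R L) (X Y Z : L) : ℂ :=
  -S.G ⁅S.J X, S.J Y⁆ Z - S.G ⁅S.J Y, S.J Z⁆ X - S.G ⁅S.J Z, S.J X⁆ Y

end SamelsonSetup

/-!
The root `α + γ` is positive, since by uniqueness of the coefficients along the simple roots no
sum of positive roots vanishes. Hence on `𝔤_γ`, `𝔤_α` and `𝔤_{-(α+γ)}` the complex structure `J`
acts by `i`, `i` and `-i`, the `J`-terms of `Φ` are `-g([X,Y],Z)`, `g([Z,X],Y)`, `g([Y,Z],X)`, and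
`Φ(X,Y,Z) = g([X,Y],Z) - g([Y,Z],X)`. Evaluating `g` on the root spaces `𝔤_{α+γ}` and `𝔤_γ` gives
`-λᵢ c_{α+γ} B([X,Y],Z)` and `-λᵢ c_γ B(X,[Y,Z])`, and the invariance of the Killing form
identifies the two Killing form values.
-/

namespace SamelsonSetup

variable {R L : Type} [AddCommGroup R] [LieRing L] [LieAlgebra ℂ L] (S : SamelsonSetup R L)

lemma add_sum_nsmul_simple_ne_zero {a : R} (ha : a ∈ S.pos) (k : Fin S.r → ℕ) :
    a + ∑ j, k j • S.simple j ≠ 0 := by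
  intro h
  have hcoeff : S.coeff a + S.coeff a + k = S.coeff a := by
    refine S.coeff_unique a ha _ ?_
    simp only [Pi.add_apply, add_smul, Finset.sum_add_distrib]
    rw [← S.coeff_spec a ha, add_assoc, h, add_zero]
  have hzero : S.coeff a = 0 := funext fun j => by
    have := congrFun hcoeff j
    simp only [Pi.add_apply] at this
    simp only [Pi.zero_apply]
    omega
  apply S.zero_not_mem
  have ha0 : a = 0 := by
    rw [S.coeff_spec a ha, hzero]
    simp
  exact ha0 ▸ S.pos_subset ha

lemma add_mem_pos {α γ : R} (hα : α ∈ S.pos) (hγ : γ ∈ S.pos) (hαγ : α + γ ∈ S.Δ) :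
    α + γ ∈ S.pos := by
  refine (S.pos_or_neg _ hαγ).resolve_right fun hneg => ?_
  have hsum : γ + -(α + γ) = ∑ j, (S.coeff γ j + S.coeff (-(α + γ)) j) • S.simple j := by
    simp only [add_smul, Finset.sum_add_distrib, ← S.coeff_spec _ hγ, ← S.coeff_spec _ hneg]
  exact S.add_sum_nsmul_simple_ne_zero hα _ (by rw [← hsum]; abel)

lemma idealOf_eq_of_mem_ideal {a : R} (ha : a ∈ S.Δ) {i : Fin S.s} {X : L}
    (haX : X ∈ S.rootSpace a) (hX : X ∈ S.ideal i) (hX0 : X ≠ 0) : S.idealOf a = i := by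
  by_contra hne
  have hdisj : Disjoint (S.ideal (S.idealOf a)) (S.ideal i) :=
    S.ideal_indep.pairwiseDisjoint hne
  exact hX0 <| by
    simpa using hdisj.le_bot (⟨S.rootSpace_le_ideal a ha X haX, hX⟩ :
      X ∈ (S.ideal (S.idealOf a) ⊓ S.ideal i : LieIdeal ℂ L))

lemma G_apply_of_mem_ideal {a : R} (ha : a ∈ S.Δ) {i : Fin S.s} {X Y : L}
    (haX : X ∈ S.rootSpace a) (hX : X ∈ S.ideal i) (hY : Y ∈ S.rootSpace (-a)) :
    S.G X Y = -(S.lam i : ℂ) * (S.c a : ℂ) * killingForm ℂ L X Y := by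
  rcases eq_or_ne X 0 with rfl | hX0
  · simp
  · rw [S.G_root a ha X haX Y hY, S.idealOf_eq_of_mem_ideal ha haX hX hX0]

lemma Phi_eq_of_J_eq_smul {X Y Z : L} (hJX : S.J X = Complex.I • X)
    (hJY : S.J Y = Complex.I • Y) (hJZ : S.J Z = -(Complex.I • Z)) :
    S.Phi X Y Z = S.G ⁅X, Y⁆ Z - S.G ⁅Y, Z⁆ X := by
  simp only [Phi, hJX, hJY, hJZ, smul_lie, lie_smul, neg_lie, lie_neg, smul_neg, smul_smul,
    Complex.I_mul_I, map_neg, map_smul, LinearMap.neg_apply, LinearMap.smul_apply, smul_eq_mul]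
  ring

end SamelsonSetup

theorem nomizu_formula_pos_pos_neg_general {R L : Type} [AddCommGroup R] [LieRing L] [LieAlgebra ℂ L]
    (S : SamelsonSetup R L) (i : Fin S.s) (α γ : R) (hα : α ∈ S.pos) (hγ : γ ∈ S.pos)
    (hγi : S.idealOf γ = i) (hαγ : α + γ ∈ S.Δ)
    (X Y Z : L) (hX : X ∈ S.rootSpace γ) (hY : Y ∈ S.rootSpace α)
    (hZ : Z ∈ S.rootSpace (-(α + γ))) :
    S.Phi X Y Z
      = -(S.lam i : ℂ) * ((S.c (α + γ) : ℂ) - (S.c γ : ℂ)) * killingForm ℂ L ⁅X, Y⁆ Z ∧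
    (S.c (α + γ) = S.c α + S.c γ - 1 →
      S.Phi X Y Z = -(S.lam i : ℂ) * ((S.c α : ℂ) - 1) * killingForm ℂ L ⁅X, Y⁆ Z) := by
  have hXY : ⁅X, Y⁆ ∈ S.rootSpace (α + γ) := add_comm γ α ▸ S.bracket_mem γ α X hX Y hY
  have hYZ : ⁅Y, Z⁆ ∈ S.rootSpace (-γ) := by
    simpa using S.bracket_mem α (-(α + γ)) Y hY Z hZ
  have hXi : X ∈ S.ideal i := hγi ▸ S.rootSpace_le_ideal γ (S.pos_subset hγ) X hX
  have hPhi : S.Phi X Y Z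
      = -(S.lam i : ℂ) * ((S.c (α + γ) : ℂ) - (S.c γ : ℂ)) * killingForm ℂ L ⁅X, Y⁆ Z := by
    rw [S.Phi_eq_of_J_eq_smul (S.J_pos γ hγ X hX) (S.J_pos α hα Y hY)
        (S.J_neg _ (S.add_mem_pos hα hγ hαγ) Z hZ),
      S.G_apply_of_mem_ideal hαγ hXY (lie_mem_left ℂ L (S.ideal i) X Y hXi) hZ, S.G_symm ⁅Y, Z⁆,
      S.G_apply_of_mem_ideal (S.pos_subset hγ) hX hXi hYZ,
      ← LieModule.traceForm_apply_lie_apply]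
    ring
  refine ⟨hPhi, fun hc => ?_⟩
  rw [hPhi, hc]
  push_cast
  ring

/-- For positive roots α, γ ∈ Δ⁺ of the simple ideal 𝔤ᵢ with α + γ ∈ Δ and
β := −α−γ, one has Φ(X, Y, Z) = −λᵢ (c_{α+γ} − c_γ) B([X,Y], Z) for all
X ∈ 𝔤_γ, Y ∈ 𝔤_α, Z ∈ 𝔤_β; in particular, if c_{α+γ} = c_α + c_γ − 1 then
Φ(X, Y, Z) = −λᵢ (c_α − 1) B([X,Y], Z). -/
theorem nomizu_formula_pos_pos_neg {R L : Type} [AddCommGroup R] [LieRing L] [LieAlgebra ℂ L]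
    (S : SamelsonSetup R L) (i : Fin S.s) (α γ : R) (hα : α ∈ S.pos) (hγ : γ ∈ S.pos)
    (hαi : S.idealOf α = i) (hγi : S.idealOf γ = i) (hαγ : α + γ ∈ S.Δ)
    (X Y Z : L) (hX : X ∈ S.rootSpace γ) (hY : Y ∈ S.rootSpace α)
    (hZ : Z ∈ S.rootSpace (-(α + γ))) :
    S.Phi X Y Z
      = -(S.lam i : ℂ) * ((S.c (α + γ) : ℂ) - (S.c γ : ℂ)) * killingForm ℂ L ⁅X, Y⁆ Z ∧
    (S.c (α + γ) = S.c α + S.c γ - 1 →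
      S.Phi X Y Z = -(S.lam i : ℂ) * ((S.c α : ℂ) - 1) * killingForm ℂ L ⁅X, Y⁆ Z) :=
  nomizu_formula_pos_pos_neg_general S i α γ hα hγ hγi hαγ X Y Z hX hY hZ
end

section
/- In the Samelson setup, assume the constants are pluriclosed, i.e. c_{α+β} = c_α + c_β − 1 for all α, β ∈ Δ⁺ with α + β ∈ Δ⁺, and let Δ_{I_max} denote the set of positive roots that are ℕ-linear combinations of simple roots αⱼ with c_{αⱼ} = 1. Then for every α ∈ Δ_{I_max}, every X ∈ 𝔤, every Y ∈ 𝔤_α ⊕ 𝔤_{−α}, and every Z which lies either in 𝔥 or in a root space 𝔤_β with β ∈ Δ and β ∉ {α, −α}, one has Φ(X, Y, Z) = 0. (Consequently each subspace 𝔤_α ⊕ 𝔤_{−α} with α ∈ Δ_{I_max} is invariant under the Bismut holonomy, giving the holonomy splitting 𝔤 = 𝔱 ⊕ ⨁_{α ∈ Δ_{I_max}} 𝔤_α^ℝ ⊕ (Σ_{α ∈ Δ⁺ \ Δ_{I_max}} 𝔤_α^ℝ).) -/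
/-!
Φ is additive in each argument, and since `g` pairs only opposite weights, Φ vanishes on root
vectors of weights `γ, ε, β` unless `γ + ε + β = 0`; it also vanishes unless the three lie in one
simple ideal. For `Z ∈ 𝔥` the surviving terms cancel because `J` acts on `𝔤_{±ε}` by scalars
squaring to `-1`. Otherwise every term is a multiple of `B([X, Y], Z)`. Three roots of one sign
cannot sum to zero, so two of `γ, ε, β` share their `J`-eigenvalue and the third has the other
one, and Φ is proportional to a difference of two `c`'s that the pluriclosed identity kills:
`c_β = c_{-β} = c_{γ+ε} = c_γ + c_ε - 1 = c_γ` since `c_{±α} = 1`, or `c_γ = 1` because `±γ` is a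
summand of `α ∈ Δ_{I_max}`. On `Δ_{I_max}`, `c ≡ 1` by induction on the height.
-/

namespace SamelsonSetup

variable {R L : Type} [AddCommGroup R] [LieRing L] [LieAlgebra ℂ L] (S : SamelsonSetup R L)

/-! ### Root combinatorics -/

lemma coeff_simple (j : Fin S.r) : S.coeff (S.simple j) = Pi.single j 1 := by
  refine (S.coeff_unique _ (S.simple_mem j) (Pi.single j 1) ?_).symm
  rw [Finset.sum_eq_single j (fun k _ hk => by rw [Pi.single_eq_of_ne hk, zero_smul])
    (by simp)]
  simp

lemma coeff_add {a b : R} (ha : a ∈ S.pos) (hb : b ∈ S.pos) (hab : a + b ∈ S.pos) :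
    S.coeff (a + b) = S.coeff a + S.coeff b := by
  refine (S.coeff_unique _ hab _ ?_).symm
  conv_lhs => rw [S.coeff_spec a ha, S.coeff_spec b hb]
  simp only [Pi.add_apply, add_smul, Finset.sum_add_distrib]

/-- Add the relation to a simple root and compare coefficients. -/
lemma eq_zero_of_sum_smul_simple_eq_zero {k : Fin S.r → ℕ}
    (hk : ∑ j, k j • S.simple j = 0) : k = 0 := by
  ext j
  have hsum := S.coeff_unique _ (S.simple_mem j) (Pi.single j 1 + k) (by
    simp only [Pi.add_apply, add_smul, Finset.sum_add_distrib, hk, add_zero]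
    rw [← S.coeff_simple, ← S.coeff_spec _ (S.simple_mem j)])
  have := congrFun hsum j
  simp only [S.coeff_simple, Pi.add_apply, Pi.single_eq_same] at this
  simpa using this

lemma add_add_ne_zero {a b d : R} (ha : a ∈ S.pos) (hb : b ∈ S.pos) (hd : d ∈ S.pos) :
    a + b + d ≠ 0 := by
  intro h
  have hk : S.coeff a + S.coeff b + S.coeff d = 0 := S.eq_zero_of_sum_smul_simple_eq_zero (by
    simp only [Pi.add_apply, add_smul, Finset.sum_add_distrib]
    rw [← S.coeff_spec a ha, ← S.coeff_spec b hb, ← S.coeff_spec d hd, h])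
  have hka : S.coeff a = 0 := by
    ext j
    have := congrFun hk j
    simp only [Pi.add_apply, Pi.zero_apply] at this ⊢
    omega
  have ha0 : a = 0 := by rw [S.coeff_spec a ha, hka]; simp
  exact S.zero_not_mem (ha0 ▸ S.pos_subset ha)

lemma neg_mem_pos {a : R} (ha : a ∈ S.Δ) (hpos : a ∉ S.pos) : -a ∈ S.pos :=
  (S.pos_or_neg a ha).resolve_left hpos

lemma add_mem_pos_s5 {a b : R} (ha : a ∈ S.pos) (hb : b ∈ S.pos) (hab : a + b ∈ S.Δ) :
    a + b ∈ S.pos := by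
  by_contra h
  exact S.add_add_ne_zero ha hb (S.neg_mem_pos hab h) (add_neg_cancel _)

def IsPluriclosed : Prop :=
  ∀ a ∈ S.pos, ∀ b ∈ S.pos, a + b ∈ S.pos → S.c (a + b) = S.c a + S.c b - 1

/-- `a ∈ Δ_{I_max}`, for a positive root `a`. -/
def InImax (a : R) : Prop :=
  ∀ j, S.coeff a j ≠ 0 → S.c (S.simple j) = 1

lemma inImax_of_add_left {a b : R} (ha : a ∈ S.pos) (hb : b ∈ S.pos) (hab : a + b ∈ S.pos)
    (h : S.InImax (a + b)) : S.InImax a := by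
  intro j hj
  apply h j
  rw [S.coeff_add ha hb hab, Pi.add_apply]
  omega

variable {S}

lemma IsPluriclosed.c_eq_one_of_inImax (hS : S.IsPluriclosed) {a : R} (ha : a ∈ S.pos)
    (hImax : S.InImax a) : S.c a = 1 := by
  induction hn : ∑ j, S.coeff a j using Nat.strong_induction_on generalizing a with
  | _ n ih =>
  by_cases hsimple : ∃ j, a = S.simple j
  · obtain ⟨j, rfl⟩ := hsimple
    exact hImax j (by simp [S.coeff_simple])
  simp only [not_exists] at hsimple
  obtain ⟨j, b, hb, rfl⟩ := S.descent a ha hsimple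
  have hcoeff := S.coeff_add (S.simple_mem j) hb ha
  have hcj : S.c (S.simple j) = 1 := hImax j (by simp [hcoeff, S.coeff_simple])
  have hcb : S.c b = 1 := by
    refine ih _ ?_ hb (S.inImax_of_add_left hb (S.simple_mem j) (add_comm (S.simple j) b ▸ ha)
      (add_comm (S.simple j) b ▸ hImax)) rfl
    rw [← hn, hcoeff]
    simp [Finset.sum_add_distrib, S.coeff_simple]
  rw [hS _ (S.simple_mem j) _ hb ha, hcj, hcb]
  ring

variable (S)

/-! ### The eigenvalues of `J` -/

lemma I_ne_neg_I : Complex.I ≠ -Complex.I := by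
  norm_num [Complex.ext_iff]

open Classical in
/-- The eigenvalue of `J` on `𝔤_a` when `a ∈ Δ`; junk otherwise. -/
noncomputable def jEigenvalue (a : R) : ℂ :=
  if a ∈ S.pos then Complex.I else -Complex.I

lemma J_apply_of_mem_rootSpace {a : R} (ha : a ∈ S.Δ) {U : L} (hU : U ∈ S.rootSpace a) :
    S.J U = S.jEigenvalue a • U := by
  unfold jEigenvalue
  split_ifs with hpos
  · exact S.J_pos a hpos U hU
  · rw [S.J_neg (-a) (S.neg_mem_pos ha hpos) U (by rwa [neg_neg]), neg_smul]

lemma jEigenvalue_mul_self (a : R) : S.jEigenvalue a * S.jEigenvalue a = -1 := by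
  unfold jEigenvalue
  split_ifs <;> simp

lemma jEigenvalue_eq_iff {a b : R} :
    S.jEigenvalue a = S.jEigenvalue b ↔ (a ∈ S.pos ↔ b ∈ S.pos) := by
  unfold jEigenvalue
  split_ifs <;> simp_all [I_ne_neg_I, I_ne_neg_I.symm]

lemma jEigenvalue_neg {a : R} (ha : a ∈ S.Δ) : S.jEigenvalue (-a) = -S.jEigenvalue a := by
  unfold jEigenvalue
  by_cases hap : a ∈ S.pos
  · simp [hap, S.not_pos_and_neg a hap]
  · simp [hap, S.neg_mem_pos ha hap]

lemma jEigenvalue_cases {γ ε β : R} (hγ : γ ∈ S.Δ) (hε : ε ∈ S.Δ) (hβ : β ∈ S.Δ)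
    (hsum : γ + ε + β = 0) :
    (S.jEigenvalue γ = S.jEigenvalue ε ∧ S.jEigenvalue β = -S.jEigenvalue γ) ∨
    (S.jEigenvalue γ = S.jEigenvalue β ∧ S.jEigenvalue ε = -S.jEigenvalue γ) ∨
    (S.jEigenvalue ε = S.jEigenvalue β ∧ S.jEigenvalue γ = -S.jEigenvalue ε) := by
  have hneg : -γ + -ε + -β = 0 := by rw [← neg_add, ← neg_add, hsum, neg_zero]
  unfold jEigenvalue
  by_cases hγp : γ ∈ S.pos <;> by_cases hεp : ε ∈ S.pos <;> by_cases hβp : β ∈ S.pos <;>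
    simp [hγp, hεp, hβp, I_ne_neg_I, I_ne_neg_I.symm]
  · exact S.add_add_ne_zero hγp hεp hβp hsum
  · exact S.add_add_ne_zero (S.neg_mem_pos hγ hγp) (S.neg_mem_pos hε hεp)
      (S.neg_mem_pos hβ hβp) hneg

variable {S}

lemma IsPluriclosed.c_add_of_mem_pos (hS : S.IsPluriclosed) {a b : R} (ha : a ∈ S.pos)
    (hb : b ∈ S.pos) (hab : a + b ∈ S.Δ) : S.c (a + b) = S.c a + S.c b - 1 :=
  hS a ha b hb (S.add_mem_pos_s5 ha hb hab)

lemma IsPluriclosed.c_add_of_jEigenvalue_eq (hS : S.IsPluriclosed) {a b : R} (ha : a ∈ S.Δ)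
    (hb : b ∈ S.Δ) (hab : a + b ∈ S.Δ) (hs : S.jEigenvalue a = S.jEigenvalue b) :
    S.c (a + b) = S.c a + S.c b - 1 := by
  have hpos := S.jEigenvalue_eq_iff.mp hs
  by_cases hap : a ∈ S.pos
  · exact hS.c_add_of_mem_pos hap (hpos.mp hap) hab
  · have hbp : b ∉ S.pos := fun hbp => hap (hpos.mpr hbp)
    have := hS.c_add_of_mem_pos (S.neg_mem_pos ha hap) (S.neg_mem_pos hb hbp)
      (by rw [← neg_add]; exact S.neg_mem _ hab)
    rwa [← neg_add, S.c_neg, S.c_neg, S.c_neg] at this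

lemma IsPluriclosed.c_eq_one_of_add_eq (hS : S.IsPluriclosed) {α : R} (hα : α ∈ S.pos)
    (hImax : S.InImax α) {a b : R} (ha : a ∈ S.Δ) (hb : b ∈ S.Δ)
    (hs : S.jEigenvalue a = S.jEigenvalue b) (hab : a + b = α ∨ a + b = -α) : S.c a = 1 := by
  have hpos := S.jEigenvalue_eq_iff.mp hs
  by_cases hap : a ∈ S.pos
  · have hbp := hpos.mp hap
    rcases hab with hab | hab
    · subst hab
      exact hS.c_eq_one_of_inImax hap (S.inImax_of_add_left hap hbp hα hImax)
    · exact absurd (by rw [hab, neg_add_cancel]) (S.add_add_ne_zero hap hbp hα)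
  · have hbp : b ∉ S.pos := fun hbp => hap (hpos.mpr hbp)
    have hna := S.neg_mem_pos ha hap
    have hnb := S.neg_mem_pos hb hbp
    rcases hab with hab | hab
    · exact absurd (by rw [← neg_add, hab, neg_add_cancel]) (S.add_add_ne_zero hna hnb hα)
    · obtain rfl : -a + -b = α := by rw [← neg_add, hab, neg_neg]
      rw [← S.c_neg]
      exact hS.c_eq_one_of_inImax hna (S.inImax_of_add_left hna hnb hα hImax)

variable (S)

/-! ### The metric and the Nomizu form on root vectors -/

lemma eq_zero_of_mem_rootSpace {a : R} (ha0 : a ≠ 0) (ha : a ∉ S.Δ) {U : L}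
    (hU : U ∈ S.rootSpace a) : U = 0 := by
  rwa [S.rootSpace_eq_bot a ha0 ha, Submodule.mem_bot] at hU

lemma mem_rootSpace_zero {U : L} : U ∈ S.rootSpace 0 ↔ U ∈ S.H := by
  rw [S.rootSpace_zero]
  rfl

lemma J_mem_rootSpace {a : R} {U : L} (hU : U ∈ S.rootSpace a) : S.J U ∈ S.rootSpace a := by
  by_cases ha0 : a = 0
  · subst ha0
    rw [S.mem_rootSpace_zero] at hU ⊢
    exact S.J_H U hU
  by_cases ha : a ∈ S.Δ
  · rw [S.J_apply_of_mem_rootSpace ha hU]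
    exact Submodule.smul_mem _ _ hU
  · rw [S.eq_zero_of_mem_rootSpace ha0 ha hU, map_zero]
    exact Submodule.zero_mem _

lemma G_eq_zero_of_add_ne_zero {a b : R} (h : a + b ≠ 0) {U V : L} (hU : U ∈ S.rootSpace a)
    (hV : V ∈ S.rootSpace b) : S.G U V = 0 := by
  by_cases ha0 : a = 0
  · subst ha0
    rw [zero_add] at h
    by_cases hb : b ∈ S.Δ
    · exact S.G_H_root b hb U (S.mem_rootSpace_zero.mp hU) V hV
    · rw [S.eq_zero_of_mem_rootSpace h hb hV, map_zero]
  by_cases ha : a ∈ S.Δ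
  · by_cases hb0 : b = 0
    · subst hb0
      rw [S.G_symm]
      exact S.G_H_root a ha V (S.mem_rootSpace_zero.mp hV) U hU
    by_cases hb : b ∈ S.Δ
    · exact S.G_roots_ne a ha b hb h U hU V hV
    · rw [S.eq_zero_of_mem_rootSpace hb0 hb hV, map_zero]
  · rw [S.eq_zero_of_mem_rootSpace ha0 ha hU, map_zero, LinearMap.zero_apply]

lemma killingForm_lie_cyclic (U V W : L) :
    killingForm ℂ L ⁅U, V⁆ W = killingForm ℂ L ⁅V, W⁆ U := by
  rw [LieModule.traceForm_apply_lie_apply]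
  exact LieModule.traceForm_comm ℂ L L U ⁅V, W⁆

lemma G_eq_killingForm {d : R} (hd : d ∈ S.Δ) {U W : L} (hU : U ∈ S.rootSpace (-d))
    (hW : W ∈ S.rootSpace d) :
    S.G U W = -(S.lam (S.idealOf d) : ℂ) * S.c d * killingForm ℂ L U W := by
  rw [S.G_root (-d) (S.neg_mem d hd) U hU W (by rwa [neg_neg]), S.idealOf_neg, S.c_neg]

lemma G_lie_eq_killingForm {a b d : R} (hd : d ∈ S.Δ) (hsum : a + b + d = 0) {U V W : L}
    (hU : U ∈ S.rootSpace a) (hV : V ∈ S.rootSpace b) (hW : W ∈ S.rootSpace d) :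
    S.G ⁅U, V⁆ W = -(S.lam (S.idealOf d) : ℂ) * S.c d * killingForm ℂ L ⁅U, V⁆ W :=
  S.G_eq_killingForm hd (eq_neg_of_add_eq_zero_left hsum ▸ S.bracket_mem a b U hU V hV) hW

lemma lie_eq_zero_of_ne {i j : Fin S.s} (hij : i ≠ j) {U V : L} (hU : U ∈ S.ideal i)
    (hV : V ∈ S.ideal j) : ⁅U, V⁆ = 0 := by
  have := LieSubmodule.lie_le_inf (S.ideal i) (S.ideal j) (LieSubmodule.lie_mem_lie hU hV)
  rwa [(S.ideal_indep.pairwiseDisjoint hij).eq_bot, LieSubmodule.mem_bot] at this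

lemma G_lie_eq_zero_of_mem_ideal {i j k : Fin S.s} (h : ¬(i = k ∧ j = k)) {U V W : L}
    (hU : U ∈ S.ideal i) (hV : V ∈ S.ideal j) (hW : W ∈ S.ideal k) : S.G ⁅U, V⁆ W = 0 := by
  by_cases hij : i = j
  · subst hij
    exact S.G_ideal_ne i k (fun hik => h ⟨hik, hik⟩) _ ((S.ideal i).lie_mem hV) W hW
  · rw [S.lie_eq_zero_of_ne hij hU hV, map_zero, LinearMap.zero_apply]

lemma Phi_add_left (X X' Y Z : L) : S.Phi (X + X') Y Z = S.Phi X Y Z + S.Phi X' Y Z := by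
  simp only [Phi, add_lie, lie_add, map_add, LinearMap.add_apply]
  ring

lemma Phi_add_middle (X Y Y' Z : L) : S.Phi X (Y + Y') Z = S.Phi X Y Z + S.Phi X Y' Z := by
  simp only [Phi, add_lie, lie_add, map_add, LinearMap.add_apply]
  ring

lemma Phi_eq_zero_of_forall_rootSpace {Y Z : L}
    (h : ∀ γ ∈ insert (0 : R) S.Δ, ∀ X ∈ S.rootSpace γ, S.Phi X Y Z = 0) (X : L) :
    S.Phi X Y Z = 0 := by
  have hX : X ∈ ⨆ γ : ↥(insert (0 : R) S.Δ), S.rootSpace γ := by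
    rw [iSup_subtype'' (insert (0 : R) S.Δ) S.rootSpace, S.rootSpace_sup]
    exact Submodule.mem_top
  refine Submodule.iSup_induction _ (motive := fun X => S.Phi X Y Z = 0) hX
    (fun γ X hX => h γ γ.2 X hX) (by simp [Phi]) ?_
  intro X X' hX hX'
  rw [S.Phi_add_left, hX, hX', add_zero]

lemma Phi_eq_zero_of_add_ne_zero {γ ε β : R} (h : γ + ε + β ≠ 0) {X Y Z : L}
    (hX : X ∈ S.rootSpace γ) (hY : Y ∈ S.rootSpace ε) (hZ : Z ∈ S.rootSpace β) :
    S.Phi X Y Z = 0 := by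
  have h₂ : β + γ + ε ≠ 0 := by rwa [add_rotate]
  have h₃ : ε + β + γ ≠ 0 := by rwa [← add_rotate]
  have hJX := S.J_mem_rootSpace hX
  have hJY := S.J_mem_rootSpace hY
  have hJZ := S.J_mem_rootSpace hZ
  rw [Phi, S.G_eq_zero_of_add_ne_zero h (S.bracket_mem γ ε X hX Y hY) hZ,
    S.G_eq_zero_of_add_ne_zero h₂ (S.bracket_mem β γ Z hZ X hX) hY,
    S.G_eq_zero_of_add_ne_zero h₃ (S.bracket_mem ε β Y hY Z hZ) hX,
    S.G_eq_zero_of_add_ne_zero h (S.bracket_mem γ ε _ hJX _ hJY) hZ,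
    S.G_eq_zero_of_add_ne_zero h₂ (S.bracket_mem β γ _ hJZ _ hJX) hY,
    S.G_eq_zero_of_add_ne_zero h₃ (S.bracket_mem ε β _ hJY _ hJZ) hX]
  ring

lemma Phi_eq_zero_of_not_idealOf_eq {γ ε β : R} (hγ : γ ∈ S.Δ) (hε : ε ∈ S.Δ) (hβ : β ∈ S.Δ)
    (h : ¬(S.idealOf γ = S.idealOf β ∧ S.idealOf ε = S.idealOf β)) {X Y Z : L}
    (hX : X ∈ S.rootSpace γ) (hY : Y ∈ S.rootSpace ε) (hZ : Z ∈ S.rootSpace β) :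
    S.Phi X Y Z = 0 := by
  have hideal : ∀ {a : R} {U : L}, a ∈ S.Δ → U ∈ S.rootSpace a →
      U ∈ S.ideal (S.idealOf a) ∧ S.J U ∈ S.ideal (S.idealOf a) := fun ha hU =>
    ⟨S.rootSpace_le_ideal _ ha _ hU, S.rootSpace_le_ideal _ ha _ (S.J_mem_rootSpace hU)⟩
  obtain ⟨iX, iJX⟩ := hideal hγ hX
  obtain ⟨iY, iJY⟩ := hideal hε hY
  obtain ⟨iZ, iJZ⟩ := hideal hβ hZ
  have h₂ : ¬(S.idealOf β = S.idealOf ε ∧ S.idealOf γ = S.idealOf ε) := by grind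
  have h₃ : ¬(S.idealOf ε = S.idealOf γ ∧ S.idealOf β = S.idealOf γ) := by grind
  rw [Phi, S.G_lie_eq_zero_of_mem_ideal h iX iY iZ, S.G_lie_eq_zero_of_mem_ideal h₂ iZ iX iY,
    S.G_lie_eq_zero_of_mem_ideal h₃ iY iZ iX, S.G_lie_eq_zero_of_mem_ideal h iJX iJY iZ,
    S.G_lie_eq_zero_of_mem_ideal h₂ iJZ iJX iY, S.G_lie_eq_zero_of_mem_ideal h₃ iJY iJZ iX]
  ring

lemma Phi_eq_zero_of_mem_H {ε : R} (hε : ε ∈ S.Δ) {X Y Z : L} (hX : X ∈ S.rootSpace (-ε))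
    (hY : Y ∈ S.rootSpace ε) (hZ : Z ∈ S.H) : S.Phi X Y Z = 0 := by
  have hcyclic : ∀ W ∈ S.H, S.G ⁅Y, W⁆ X = S.G ⁅W, X⁆ Y := by
    intro W hW
    have hW0 := S.mem_rootSpace_zero.mpr hW
    have hYW : ⁅Y, W⁆ ∈ S.rootSpace ε := by simpa using S.bracket_mem ε 0 Y hY W hW0
    rw [S.G_root ε hε _ hYW X hX, S.G_lie_eq_killingForm hε (by abel) hW0 hX hY,
      killingForm_lie_cyclic]
  rw [Phi, S.J_apply_of_mem_rootSpace (S.neg_mem ε hε) hX, S.J_apply_of_mem_rootSpace hε hY,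
    S.jEigenvalue_neg hε]
  simp only [smul_lie, lie_smul, map_smul, LinearMap.smul_apply, smul_eq_mul]
  rw [hcyclic Z hZ, hcyclic _ (S.J_H Z hZ)]
  linear_combination (1 / 2 * S.G ⁅X, Y⁆ Z) * S.jEigenvalue_mul_self ε

lemma Phi_eq_of_add_eq_zero {γ ε β : R} (hγ : γ ∈ S.Δ) (hε : ε ∈ S.Δ) (hβ : β ∈ S.Δ)
    (hsum : γ + ε + β = 0) (hγi : S.idealOf γ = S.idealOf β) (hεi : S.idealOf ε = S.idealOf β)
    {X Y Z : L} (hX : X ∈ S.rootSpace γ) (hY : Y ∈ S.rootSpace ε) (hZ : Z ∈ S.rootSpace β) :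
    S.Phi X Y Z = -(S.lam (S.idealOf β) : ℂ) / 2 * killingForm ℂ L ⁅X, Y⁆ Z *
      (S.c β + S.c ε - S.c γ - S.jEigenvalue γ * S.jEigenvalue ε * S.c β
        - S.jEigenvalue β * S.jEigenvalue γ * S.c ε
        - S.jEigenvalue ε * S.jEigenvalue β * S.c γ) := by
  have e₁ := S.G_lie_eq_killingForm hβ hsum hX hY hZ
  have e₂ := S.G_lie_eq_killingForm hε (by rw [← hsum]; abel) hZ hX hY
  have e₃ := S.G_lie_eq_killingForm hγ (by rw [← hsum]; abel) hY hZ hX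
  rw [Phi, S.J_apply_of_mem_rootSpace hγ hX, S.J_apply_of_mem_rootSpace hε hY,
    S.J_apply_of_mem_rootSpace hβ hZ]
  simp only [smul_lie, lie_smul, map_smul, LinearMap.smul_apply, smul_eq_mul]
  rw [e₁, e₂, e₃, hγi, hεi, killingForm_lie_cyclic Z X Y, killingForm_lie_cyclic Y Z X,
    killingForm_lie_cyclic Z X Y]
  ring

/-- Each hypothesis makes one pattern of `J`-eigenvalues contribute nothing; when `ε` and `β`
share the eigenvalue the terms cancel for any `c`. -/
lemma Phi_eq_zero_of_add_eq_zero {γ ε β : R} (hγ : γ ∈ S.Δ) (hε : ε ∈ S.Δ) (hβ : β ∈ S.Δ)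
    (hsum : γ + ε + β = 0) (hγi : S.idealOf γ = S.idealOf β) (hεi : S.idealOf ε = S.idealOf β)
    (hγε : S.jEigenvalue γ = S.jEigenvalue ε → S.c β = S.c γ)
    (hγβ : S.jEigenvalue γ = S.jEigenvalue β → S.c ε = S.c γ)
    {X Y Z : L} (hX : X ∈ S.rootSpace γ) (hY : Y ∈ S.rootSpace ε) (hZ : Z ∈ S.rootSpace β) :
    S.Phi X Y Z = 0 := by
  rw [S.Phi_eq_of_add_eq_zero hγ hε hβ hsum hγi hεi hX hY hZ]
  set ρ := -(S.lam (S.idealOf β) : ℂ) / 2 * killingForm ℂ L ⁅X, Y⁆ Z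
  rcases S.jEigenvalue_cases hγ hε hβ hsum with ⟨hs, hs'⟩ | ⟨hs, hs'⟩ | ⟨hs, hs'⟩
  · have hc : (S.c β : ℂ) = S.c γ := by exact_mod_cast hγε hs
    rw [← hs, hs']
    linear_combination ρ * (2 * hc - (S.c β - S.c ε - S.c γ : ℂ) * S.jEigenvalue_mul_self γ)
  · have hc : (S.c ε : ℂ) = S.c γ := by exact_mod_cast hγβ hs
    rw [← hs, hs']
    linear_combination ρ * (2 * hc + (S.c β - S.c ε + S.c γ : ℂ) * S.jEigenvalue_mul_self γ)
  · rw [← hs, hs']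
    linear_combination ρ * (S.c β + S.c ε - S.c γ : ℂ) * S.jEigenvalue_mul_self ε

variable {S}

lemma IsPluriclosed.Phi_rootSpace_eq_zero (hS : S.IsPluriclosed) {α : R} (hα : α ∈ S.pos)
    (hImax : S.InImax α) {γ ε β : R} (hγ : γ ∈ insert (0 : R) S.Δ) (hεα : ε = α ∨ ε = -α)
    (hβ : β ∈ insert (0 : R) S.Δ) (hβα : β ≠ α) (hβα' : β ≠ -α) {X Y Z : L}
    (hX : X ∈ S.rootSpace γ) (hY : Y ∈ S.rootSpace ε) (hZ : Z ∈ S.rootSpace β) :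
    S.Phi X Y Z = 0 := by
  have hε : ε ∈ S.Δ := by
    rcases hεα with rfl | rfl
    exacts [S.pos_subset hα, S.neg_mem _ (S.pos_subset hα)]
  have hcε : S.c ε = 1 := by
    rcases hεα with rfl | rfl <;> simp only [S.c_neg, hS.c_eq_one_of_inImax hα hImax]
  by_cases hsum : γ + ε + β = 0
  swap
  · exact S.Phi_eq_zero_of_add_ne_zero hsum hX hY hZ
  rcases hβ with rfl | hβ
  · obtain rfl : γ = -ε := eq_neg_of_add_eq_zero_left (by simpa using hsum)
    exact S.Phi_eq_zero_of_mem_H hε hX hY (S.mem_rootSpace_zero.mp hZ)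
  rcases hγ with rfl | hγ
  · have hβε : β = -ε := eq_neg_of_add_eq_zero_right (by simpa using hsum)
    rcases hεα with rfl | rfl
    exacts [absurd hβε hβα', absurd (hβε.trans (neg_neg α)) hβα]
  by_cases hideal : S.idealOf γ = S.idealOf β ∧ S.idealOf ε = S.idealOf β
  swap
  · exact S.Phi_eq_zero_of_not_idealOf_eq hγ hε hβ hideal hX hY hZ
  refine S.Phi_eq_zero_of_add_eq_zero hγ hε hβ hsum hideal.1 hideal.2
    (fun hs => ?_) (fun hs => ?_) hX hY hZ
  · have hγε : γ + ε = -β := eq_neg_of_add_eq_zero_left hsum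
    rw [← S.c_neg β, ← hγε, hS.c_add_of_jEigenvalue_eq hγ hε (hγε ▸ S.neg_mem β hβ) hs, hcε]
    ring
  · have hγβ : γ + β = -ε := eq_neg_of_add_eq_zero_left (by rw [← hsum]; abel)
    rw [hcε, hS.c_eq_one_of_add_eq hα hImax hγ hβ hs ?_]
    rcases hεα with rfl | rfl
    exacts [.inr hγβ, .inl (hγβ.trans (neg_neg α))]

end SamelsonSetup

/-- Assume the constants are pluriclosed. For every positive root α that is an
ℕ-linear combination of simple roots αⱼ with c_{αⱼ} = 1 (i.e. α ∈ Δ_{I_max}), every X ∈ 𝔤,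
every Y ∈ 𝔤_α ⊕ 𝔤_{−α}, and every Z lying either in 𝔥 or in a root space 𝔤_β with
β ∈ Δ \ {α, −α}, one has Φ(X, Y, Z) = 0.  This gives the Bismut holonomy splitting
𝔤 = 𝔱 ⊕ ⨁_{α ∈ Δ_{I_max}} 𝔤_α^ℝ ⊕ (Σ_{α ∈ Δ⁺ \ Δ_{I_max}} 𝔤_α^ℝ). -/
theorem holonomy_splitting_Imax {R L : Type} [AddCommGroup R] [LieRing L] [LieAlgebra ℂ L]
    (S : SamelsonSetup R L)
    (hpluri : ∀ a ∈ S.pos, ∀ b ∈ S.pos, a + b ∈ S.pos → S.c (a + b) = S.c a + S.c b - 1)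
    (α : R) (hα : α ∈ S.pos)
    (hαImax : ∀ j, S.coeff α j ≠ 0 → S.c (S.simple j) = 1)
    (X Y Z : L) (hY : Y ∈ S.rootSpace α ⊔ S.rootSpace (-α))
    (hZ : Z ∈ S.H ∨ ∃ β ∈ S.Δ, β ≠ α ∧ β ≠ -α ∧ Z ∈ S.rootSpace β) :
    S.Phi X Y Z = 0 := by
  have hS : S.IsPluriclosed := hpluri
  obtain ⟨β, hβ, hβα, hβα', hZβ⟩ :
      ∃ β ∈ insert (0 : R) S.Δ, β ≠ α ∧ β ≠ -α ∧ Z ∈ S.rootSpace β := by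
    rcases hZ with hZ | ⟨β, hβ, hβα, hβα', hZβ⟩
    · have hα0 : α ≠ 0 := fun h => S.zero_not_mem (h ▸ S.pos_subset hα)
      exact ⟨0, Set.mem_insert _ _, hα0.symm, (neg_ne_zero.mpr hα0).symm,
        S.mem_rootSpace_zero.mpr hZ⟩
    · exact ⟨β, Set.mem_insert_of_mem _ hβ, hβα, hβα', hZβ⟩
  have hroot : ∀ ε, (ε = α ∨ ε = -α) → ∀ Y ∈ S.rootSpace ε, S.Phi X Y Z = 0 :=
    fun ε hε Y hY => S.Phi_eq_zero_of_forall_rootSpace (fun _ hγ _ hX =>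
      hS.Phi_rootSpace_eq_zero hα hαImax hγ hε hβ hβα hβα' hX hY hZβ) X
  obtain ⟨Y₁, hY₁, Y₂, hY₂, rfl⟩ := Submodule.mem_sup.mp hY
  rw [S.Phi_add_middle, hroot α (.inl rfl) Y₁ hY₁, hroot (-α) (.inr rfl) Y₂ hY₂, add_zero]
end

section
/- In the Samelson setup, assume the constants are pluriclosed, i.e. c_{α+β} = c_α + c_β − 1 for all α, β ∈ Δ⁺ with α + β ∈ Δ⁺. Let Δ_{I_max} denote the set of positive roots that are ℕ-linear combinations of simple roots αⱼ with c_{αⱼ} = 1. Then c_α = 1 for every α ∈ Δ_{I_max}. -/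
/-- Abstract data of the root system of a finite-dimensional complex semisimple Lie algebra
relative to a Cartan subalgebra: the set of roots `Δ` inside the weight lattice (an additive
group `R`), a fixed choice of positive roots `pos`, the corresponding simple roots
`simple 1, …, simple r`, and the (unique) expression of every positive root as an ℕ-linear
combination of simple roots, recorded by `coeff`.  The field `descent` records the standard
root-system fact that every non-simple positive root is a simple root plus a positive root. -/
structure RootData (R : Type) [AddCommGroup R] where
  /-- the root system Δ -/
  Δ : Set R
  /-- the positive roots Δ⁺ -/
  pos : Set R
  Δ_finite : Δ.Finite
  pos_subset : pos ⊆ Δ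
  zero_not_mem : (0 : R) ∉ Δ
  neg_mem : ∀ a ∈ Δ, -a ∈ Δ
  pos_or_neg : ∀ a ∈ Δ, a ∈ pos ∨ -a ∈ pos
  not_pos_and_neg : ∀ a ∈ pos, -a ∉ pos
  /-- the number of simple roots (= rank) -/
  r : ℕ
  /-- the simple roots α₁, …, α_r -/
  simple : Fin r → R
  simple_mem : ∀ j, simple j ∈ pos
  /-- the coefficients of a positive root as an ℕ-linear combination of simple roots -/
  coeff : R → Fin r → ℕ
  coeff_spec : ∀ a ∈ pos, a = ∑ j, coeff a j • simple j
  coeff_unique : ∀ a ∈ pos, ∀ k : Fin r → ℕ, a = ∑ j, k j • simple j → k = coeff a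
  descent : ∀ a ∈ pos, (∀ j, a ≠ simple j) → ∃ j, ∃ b ∈ pos, a = simple j + b

/-! Every positive root is reached from a simple root by adding simple roots one at a time
without leaving `Δ⁺`, and pluriclosedness says exactly that `c - 1` is additive along each such
step. Hence `c - 1` vanishes on every positive root whose support lies where it vanishes on the
simple roots. -/

namespace RootData

variable {R : Type} [AddCommGroup R] (D : RootData R)

def height (a : R) : ℕ := ∑ j, D.coeff a j

theorem coeff_simple (j : Fin D.r) : D.coeff (D.simple j) = Pi.single j 1 :=
  (D.coeff_unique _ (D.simple_mem j) _ (by simp [Pi.single_apply])).symm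

theorem coeff_simple_add (j : Fin D.r) {b : R} (hb : b ∈ D.pos) (hjb : D.simple j + b ∈ D.pos) :
    D.coeff (D.simple j + b) = Pi.single j 1 + D.coeff b :=
  (D.coeff_unique _ hjb _ (by
    simp [add_smul, Finset.sum_add_distrib, Pi.single_apply, ← D.coeff_spec b hb])).symm

theorem height_simple_add (j : Fin D.r) {b : R} (hb : b ∈ D.pos)
    (hjb : D.simple j + b ∈ D.pos) : D.height (D.simple j + b) = D.height b + 1 := by
  simp only [height, D.coeff_simple_add j hb hjb, Pi.add_apply, Finset.sum_add_distrib]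
  simp [add_comm]

theorem pos_induction {P : R → Prop} (simple : ∀ j, P (D.simple j))
    (simple_add : ∀ j, ∀ b ∈ D.pos, D.simple j + b ∈ D.pos → P b → P (D.simple j + b)) :
    ∀ a ∈ D.pos, P a := by
  intro a ha
  induction hn : D.height a using Nat.strong_induction_on generalizing a with
  | _ n ih =>
    by_cases hs : ∃ j, a = D.simple j
    · obtain ⟨j, rfl⟩ := hs
      exact simple j
    · push Not at hs
      obtain ⟨j, b, hb, rfl⟩ := D.descent a ha hs
      have hlt : D.height b < n := by
        rw [← hn, D.height_simple_add j hb ha]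
        exact Nat.lt_succ_self _
      exact simple_add j b hb ha (ih _ hlt b hb rfl)

end RootData

theorem c_eq_one_on_Imax_general {R : Type} [AddCommGroup R] (D : RootData R)
    (c : R → ℝ)
    (hpluri : ∀ a ∈ D.pos, ∀ b ∈ D.pos, a + b ∈ D.pos → c (a + b) = c a + c b - 1)
    (α : R) (hα : α ∈ D.pos) (hImax : ∀ j, D.coeff α j ≠ 0 → c (D.simple j) = 1) :
    c α = 1 := by
  refine D.pos_induction
    (P := fun a ↦ (∀ j, D.coeff a j ≠ 0 → c (D.simple j) = 1) → c a = 1) ?_ ?_ α hα hImax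
  · intro j hsupp
    exact hsupp j (by simp [D.coeff_simple])
  · intro j b hb hjb ih hsupp
    simp only [D.coeff_simple_add j hb hjb, Pi.add_apply] at hsupp
    have hj : c (D.simple j) = 1 := hsupp j (by simp)
    have hb1 : c b = 1 := ih fun i hi ↦ hsupp i (by omega)
    rw [hpluri _ (D.simple_mem j) _ hb hjb, hj, hb1]
    ring

/-- If the positive constants c_α are pluriclosed, i.e.
c_{α+β} = c_α + c_β − 1 for all α, β ∈ Δ⁺ with α + β ∈ Δ⁺, then c_α = 1 for every
positive root α that is an ℕ-linear combination of simple roots αⱼ with c_{αⱼ} = 1. -/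
theorem c_eq_one_on_Imax {R : Type} [AddCommGroup R] (D : RootData R)
    (c : R → ℝ) (hc : ∀ a ∈ D.pos, 0 < c a)
    (hpluri : ∀ a ∈ D.pos, ∀ b ∈ D.pos, a + b ∈ D.pos → c (a + b) = c a + c b - 1)
    (α : R) (hα : α ∈ D.pos) (hImax : ∀ j, D.coeff α j ≠ 0 → c (D.simple j) = 1) :
    c α = 1 :=
  c_eq_one_on_Imax_general D c hpluri α hα hImax
end

section
/- Let V be a finite-dimensional real vector space equipped with a symmetric bilinear form g, an endomorphism J with J² = −id and g(JX, JY) = g(X, Y) for all X, Y, a bilinear bracket [·,·] : V × V → V, and a linear family of endomorphisms Λ : V → End(V), written X ↦ Λ_X, such that Λ_X ∘ J = J ∘ Λ_X for all X. Define T(X,Y,Z) := g(Λ_X Y − Λ_Y X − [X,Y], Z) and the Nijenhuis expression N(X,Y) := [X,Y] + J[JX,Y] + J[X,JY] − [JX,JY]. Then for all X, Y, Z ∈ V: g(N(X,Y), Z) = −T(X,Y,Z) + T(X,JY,JZ) + T(JX,Y,JZ) + T(JX,JY,Z). -/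
/-!
The torsion splits as `g(Λ_X Y − Λ_Y X, Z) − g([X,Y], Z)`. Since each `Λ_X` commutes with `J` and
`J` is a `g`-skew complex structure, the `Λ`-terms of the four torsion summands cancel in pairs,
while the bracket terms reassemble into `g(N(X,Y), Z)`.
-/

namespace LinearMap.BilinForm

variable {R M : Type*} [CommRing R] [AddCommGroup M] [Module R M]
  {g : LinearMap.BilinForm R M} {J : M →ₗ[R] M}

theorem apply_left_eq_neg_apply_right_of_isometry (hJ : ∀ x : M, J (J x) = -x)
    (hgJ : ∀ x y : M, g (J x) (J y) = g x y) (x y : M) : g (J x) y = -g x (J y) := by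
  have h := hgJ x (J y)
  rw [hJ, map_neg] at h
  rw [← h, neg_neg]

theorem twisted_sum_sub_swap_eq_zero (hJ : ∀ x : M, J (J x) = -x)
    (hgJ : ∀ x y : M, g (J x) (J y) = g x y) (Λ : M → M → M)
    (hΛJ : ∀ x y : M, Λ x (J y) = J (Λ x y))
    (x y z : M) :
    -g (Λ x y - Λ y x) z + g (Λ x (J y) - Λ (J y) x) (J z)
      + g (Λ (J x) y - Λ y (J x)) (J z) + g (Λ (J x) (J y) - Λ (J y) (J x)) z = 0 := by
  have hskew := apply_left_eq_neg_apply_right_of_isometry hJ hgJ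
  simp only [hΛJ, map_sub, LinearMap.sub_apply, hgJ, hskew]
  ring

theorem apply_nijenhuis_eq (hJ : ∀ x : M, J (J x) = -x) (hgJ : ∀ x y : M, g (J x) (J y) = g x y)
    (b : M → M → M) (x y z : M) :
    g (b x y + J (b (J x) y) + J (b x (J y)) - b (J x) (J y)) z
      = g (b x y) z - g (b x (J y)) (J z) - g (b (J x) y) (J z) - g (b (J x) (J y)) z := by
  have hskew := apply_left_eq_neg_apply_right_of_isometry hJ hgJ
  simp only [map_add, map_sub, LinearMap.add_apply, LinearMap.sub_apply, hskew]
  ring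

end LinearMap.BilinForm

open LinearMap.BilinForm in
theorem nijenhuis_from_torsion_general
    (V : Type) [AddCommGroup V] [Module ℝ V]
    (g : LinearMap.BilinForm ℝ V)
    (J : V →ₗ[ℝ] V) (hJ : ∀ X : V, J (J X) = -X)
    (hgJ : ∀ X Y : V, g (J X) (J Y) = g X Y)
    (bracket : V →ₗ[ℝ] V →ₗ[ℝ] V)
    (Λ : V →ₗ[ℝ] V →ₗ[ℝ] V) (hΛJ : ∀ X Y : V, Λ X (J Y) = J (Λ X Y))
    (T : V → V → V → ℝ)
    (hT : ∀ X Y Z : V, T X Y Z = g (Λ X Y - Λ Y X - bracket X Y) Z)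
    (N : V → V → V)
    (hN : ∀ X Y : V, N X Y = bracket X Y + J (bracket (J X) Y) + J (bracket X (J Y))
      - bracket (J X) (J Y)) :
    ∀ X Y Z : V, g (N X Y) Z
      = -(T X Y Z) + T X (J Y) (J Z) + T (J X) Y (J Z) + T (J X) (J Y) Z := by
  intro X Y Z
  have hΛ := twisted_sum_sub_swap_eq_zero hJ hgJ (fun x y => Λ x y) hΛJ X Y Z
  rw [hN, apply_nijenhuis_eq hJ hgJ (fun x y => bracket x y)]
  simp only [hT, map_sub, LinearMap.sub_apply] at hΛ ⊢
  linear_combination -hΛ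

/-- Let V be a finite-dimensional real vector space with a symmetric bilinear
form g, an endomorphism J with J² = −id and g(JX, JY) = g(X, Y), a bilinear bracket
[·,·] : V × V → V, and a (bi)linear family of endomorphisms Λ : V → End(V) with
Λ_X ∘ J = J ∘ Λ_X.  With T(X,Y,Z) := g(Λ_X Y − Λ_Y X − [X,Y], Z) and
N(X,Y) := [X,Y] + J[JX,Y] + J[X,JY] − [JX,JY], one has
g(N(X,Y), Z) = −T(X,Y,Z) + T(X,JY,JZ) + T(JX,Y,JZ) + T(JX,JY,Z) for all X, Y, Z ∈ V. -/
theorem nijenhuis_from_torsion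
    (V : Type) [AddCommGroup V] [Module ℝ V] [FiniteDimensional ℝ V]
    (g : LinearMap.BilinForm ℝ V) (hg : ∀ X Y : V, g X Y = g Y X)
    (J : V →ₗ[ℝ] V) (hJ : ∀ X : V, J (J X) = -X)
    (hgJ : ∀ X Y : V, g (J X) (J Y) = g X Y)
    (bracket : V →ₗ[ℝ] V →ₗ[ℝ] V)
    (Λ : V →ₗ[ℝ] V →ₗ[ℝ] V) (hΛJ : ∀ X Y : V, Λ X (J Y) = J (Λ X Y))
    (T : V → V → V → ℝ)
    (hT : ∀ X Y Z : V, T X Y Z = g (Λ X Y - Λ Y X - bracket X Y) Z)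
    (N : V → V → V)
    (hN : ∀ X Y : V, N X Y = bracket X Y + J (bracket (J X) Y) + J (bracket X (J Y))
      - bracket (J X) (J Y)) :
    ∀ X Y Z : V, g (N X Y) Z
      = -(T X Y Z) + T X (J Y) (J Z) + T (J X) Y (J Z) + T (J X) (J Y) Z :=
  nijenhuis_from_torsion_general V g J hJ hgJ bracket Λ hΛJ T hT N hN
end
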